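/- arXiv:1904.06321 — 3 statements merged into one kernel-verified Lean document; each statement's English description precedes it below -/
import Mathlib

section
/- Let f : ℝⁿ → ℝ be differentiable with gradient ∇f that is L-Lipschitz continuous on ℝⁿ for some L > 0. Let x, d ∈ ℝⁿ with g = ∇f(x) ≠ 0 and d ≠ 0, let τ, c₁, ρ ∈ (0,1) and ᾱ > 0, and suppose d satisfies ⟨d, g⟩ ≤ -(1-τ)·‖g‖². Suppose the steplength α > 0 satisfies either α = ᾱ, or (α ≤ ᾱ and f(x + ρ⁻¹α d) > f(x) + c₁·ρ⁻¹·α·⟨d, g⟩). Then α ≥ C·‖g‖²/‖d‖² where C = min{ᾱ(1-τ)², ρ(1-c₁)(1-τ)/L}. -/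
/-!
If `α = ᾱ`, Cauchy–Schwarz turns the sufficient-descent condition on `d` into
`(1 - τ) ‖∇f x‖ ≤ ‖d‖`. Otherwise the Armijo condition fails at `β = ρ⁻¹ α`; comparing this with
the descent lemma `f (x + β d) ≤ f x + β ⟪d, ∇f x⟫ + L β² ‖d‖²` gives
`(1 - c₁) (1 - τ) ‖∇f x‖² ≤ (1 - c₁) (-⟪d, ∇f x⟫) < L β ‖d‖²`.
-/

open RealInnerProductSpace

section

variable {E : Type*} [NormedAddCommGroup E] [InnerProductSpace ℝ E]

theorem mul_norm_le_norm_of_inner_le_neg_mul_sq {g d : E} {c : ℝ}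
    (h : ⟪d, g⟫ ≤ -c * ‖g‖ ^ 2) : c * ‖g‖ ≤ ‖d‖ := by
  rcases (norm_nonneg g).eq_or_lt with hg | hg
  · simp [← hg]
  · have hcs : -⟪d, g⟫ ≤ ‖d‖ * ‖g‖ := (neg_le_abs _).trans (abs_real_inner_le_norm d g)
    nlinarith

variable [CompleteSpace E]

/-- The descent lemma with `L` in place of the sharp constant `L / 2`: the mean value inequality
suffices for it. -/
theorem le_add_inner_gradient_add_mul_sq {f : E → ℝ} (hf : Differentiable ℝ f) {L : ℝ}
    (hL : 0 ≤ L) {x : E} (hlip : ∀ z, ‖gradient f z - gradient f x‖ ≤ L * ‖z - x‖) (y : E) :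
    f y ≤ f x + ⟪gradient f x, y - x⟫ + L * ‖y - x‖ ^ 2 := by
  have hbound : ∀ z ∈ segment ℝ x y, ‖fderiv ℝ f z - fderiv ℝ f x‖ ≤ L * ‖y - x‖ := by
    intro z hz
    rw [← toDual_gradient, ← toDual_gradient, ← map_sub, LinearIsometryEquiv.norm_map]
    exact (hlip z).trans (mul_le_mul_of_nonneg_left (norm_sub_le_of_mem_segment hz) hL)
  have hmvt := (convex_segment x y).norm_image_sub_le_of_norm_fderiv_le' (fun z _ => hf z)
    hbound (left_mem_segment ℝ x y) (right_mem_segment ℝ x y)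
  rw [← toDual_gradient, InnerProductSpace.toDual_apply_apply, Real.norm_eq_abs] at hmvt
  linarith [(abs_le.mp hmvt).2]

theorem mul_neg_inner_lt_of_not_armijo {f : E → ℝ} (hf : Differentiable ℝ f) {L : ℝ}
    (hL : 0 ≤ L) {x : E} (hlip : ∀ z, ‖gradient f z - gradient f x‖ ≤ L * ‖z - x‖)
    {d : E} {c₁ β : ℝ} (hβ : 0 < β)
    (hviol : f x + c₁ * β * ⟪d, gradient f x⟫ < f (x + β • d)) :
    (1 - c₁) * -⟪d, gradient f x⟫ < L * β * ‖d‖ ^ 2 := by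
  have hdescent := le_add_inner_gradient_add_mul_sq hf hL hlip (x + β • d)
  rw [add_sub_cancel_left, real_inner_smul_right, real_inner_comm, norm_smul,
    Real.norm_of_nonneg hβ.le, mul_pow] at hdescent
  nlinarith

end

theorem steplength_lower_bound_general
    (n : ℕ) (f : EuclideanSpace ℝ (Fin n) → ℝ)
    (hf : Differentiable ℝ f)
    (L : ℝ) (hL : 0 < L)
    (hlip : ∀ x y : EuclideanSpace ℝ (Fin n),
      ‖gradient f x - gradient f y‖ ≤ L * ‖x - y‖)
    (x d : EuclideanSpace ℝ (Fin n))
    (τ c₁ ρ : ℝ)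
    (hτ : τ ∈ Set.Ioo (0 : ℝ) 1) (hc₁ : c₁ ∈ Set.Ioo (0 : ℝ) 1)
    (hρ : ρ ∈ Set.Ioo (0 : ℝ) 1)
    (ᾱ : ℝ)
    (hdesc : ⟪d, gradient f x⟫ ≤ -(1 - τ) * ‖gradient f x‖ ^ 2)
    (α : ℝ) (hα : 0 < α)
    (hcases : α = ᾱ ∨ (α ≤ ᾱ ∧
      f (x + (ρ⁻¹ * α) • d) >
        f x + c₁ * (ρ⁻¹ * α) * ⟪d, gradient f x⟫)) :
    α ≥ min (ᾱ * (1 - τ) ^ 2) (ρ * (1 - c₁) * (1 - τ) / L) *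
      ‖gradient f x‖ ^ 2 / ‖d‖ ^ 2 := by
  obtain ⟨-, hτ₁⟩ := hτ
  obtain ⟨-, hc₁₁⟩ := hc₁
  obtain ⟨hρ₀, -⟩ := hρ
  set g := gradient f x
  refine div_le_of_le_mul₀ (by positivity) hα.le ?_
  rcases hcases with rfl | ⟨-, hviol⟩
  · have hgd : (1 - τ) * ‖g‖ ≤ ‖d‖ := mul_norm_le_norm_of_inner_le_neg_mul_sq hdesc
    calc min (α * (1 - τ) ^ 2) (ρ * (1 - c₁) * (1 - τ) / L) * ‖g‖ ^ 2
        ≤ α * ((1 - τ) * ‖g‖) ^ 2 := by rw [mul_pow, ← mul_assoc]; gcongr; exact min_le_left _ _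
      _ ≤ α * ‖d‖ ^ 2 := by gcongr
  · have hβ := mul_neg_inner_lt_of_not_armijo hf hL.le (fun z => hlip z x) (by positivity) hviol
    calc min (ᾱ * (1 - τ) ^ 2) (ρ * (1 - c₁) * (1 - τ) / L) * ‖g‖ ^ 2
        ≤ ρ * (1 - c₁) * (1 - τ) / L * ‖g‖ ^ 2 := by gcongr; exact min_le_right _ _
      _ = ρ / L * ((1 - c₁) * ((1 - τ) * ‖g‖ ^ 2)) := by ring
      _ ≤ ρ / L * ((1 - c₁) * -⟪d, g⟫) := by gcongr; linarith
      _ ≤ ρ / L * (L * (ρ⁻¹ * α) * ‖d‖ ^ 2) := by gcongr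
      _ = α * ‖d‖ ^ 2 := by field_simp

theorem steplength_lower_bound
    (n : ℕ) (f : EuclideanSpace ℝ (Fin n) → ℝ)
    (hf : Differentiable ℝ f)
    (L : ℝ) (hL : 0 < L)
    (hlip : ∀ x y : EuclideanSpace ℝ (Fin n),
      ‖gradient f x - gradient f y‖ ≤ L * ‖x - y‖)
    (x d : EuclideanSpace ℝ (Fin n))
    (hg : gradient f x ≠ 0) (hd : d ≠ 0)
    (τ c₁ ρ : ℝ)
    (hτ : τ ∈ Set.Ioo (0 : ℝ) 1) (hc₁ : c₁ ∈ Set.Ioo (0 : ℝ) 1)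
    (hρ : ρ ∈ Set.Ioo (0 : ℝ) 1)
    (ᾱ : ℝ) (hᾱ : 0 < ᾱ)
    (hdesc : ⟪d, gradient f x⟫ ≤ -(1 - τ) * ‖gradient f x‖ ^ 2)
    (α : ℝ) (hα : 0 < α)
    (hcases : α = ᾱ ∨ (α ≤ ᾱ ∧
      f (x + (ρ⁻¹ * α) • d) >
        f x + c₁ * (ρ⁻¹ * α) * ⟪d, gradient f x⟫)) :
    α ≥ min (ᾱ * (1 - τ) ^ 2) (ρ * (1 - c₁) * (1 - τ) / L) *
      ‖gradient f x‖ ^ 2 / ‖d‖ ^ 2 :=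
  steplength_lower_bound_general n f hf L hL hlip x d τ c₁ ρ hτ hc₁ hρ ᾱ hdesc α hα hcases
end

section
/- Let f : ℝⁿ → ℝ be differentiable, bounded below on ℝⁿ, with gradient ∇f that is L-Lipschitz continuous on ℝⁿ for some L > 0. Fix constants τ, c₁, ρ ∈ (0,1) and ᾱ > 0. Let x_k, d_k, α_k be generated by the new conjugate gradient-like algorithm: g_k = ∇f(x_k) ≠ 0 for all k, d_0 = -g_0, d_k = -g_k + τ·(‖g_k‖/‖d_{k-1}‖)·d_{k-1} for k ≥ 1, x_{k+1} = x_k + α_k d_k, where each α_k > 0 satisfies the Armijo condition f(x_{k+1}) ≤ f(x_k) + c₁ α_k ⟨d_k, g_k⟩ and either α_k = ᾱ or (α_k ≤ ᾱ and f(x_k + ρ⁻¹α_k d_k) > f(x_k) + c₁ρ⁻¹α_k ⟨d_k, g_k⟩). Then the Zoutendijk-type condition holds: ∑_{k=0}^∞ ‖g_k‖⁴/‖d_k‖² < ∞. -/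
/-!
Every direction is the steepest-descent direction perturbed by a vector of norm at most
`τ ‖g_k‖` (for `k ≥ 1` the perturbation is `τ ‖g_k‖ d_{k-1} / ‖d_{k-1}‖`), so
`‖d_k‖ ≥ (1 - τ) ‖g_k‖` and `-⟪d_k, g_k⟫ ≥ (1 - τ) ‖g_k‖²`. Summing the Armijo inequalities
against the lower bound of `f` shows that `α_k (-⟪d_k, g_k⟫)` is summable. Finally
`‖g_k‖⁴ / ‖d_k‖²` is bounded by a fixed multiple of `α_k (-⟪d_k, g_k⟫)`: trivially when
`α_k = ᾱ`, and otherwise because the descent lemma turns the failed Armijo test at `α_k / ρ`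
into the lower bound `α_k ≥ 2ρ(1 - c₁)(-⟪d_k, g_k⟫) / (L ‖d_k‖²)`.
-/

open RealInnerProductSpace

section Direction

variable {E : Type*} [NormedAddCommGroup E]

theorem norm_smul_div_norm_le [NormedSpace ℝ E] {τ a : ℝ} (hτ : 0 ≤ τ) (ha : 0 ≤ a) (d : E) :
    ‖(τ * (a / ‖d‖)) • d‖ ≤ τ * a := by
  rcases eq_or_ne d 0 with rfl | hd
  · simpa using mul_nonneg hτ ha
  · rw [norm_smul, Real.norm_of_nonneg (by positivity), mul_assoc,
      div_mul_cancel₀ _ (norm_ne_zero_iff.2 hd)]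

variable {τ : ℝ} {g w : E}

theorem one_sub_mul_norm_le_norm_neg_add (hw : ‖w‖ ≤ τ * ‖g‖) :
    (1 - τ) * ‖g‖ ≤ ‖-g + w‖ := by
  have := norm_sub_le (-g + w) w
  rw [add_sub_cancel_right, norm_neg] at this
  linarith

theorem one_sub_mul_sq_le_neg_inner_neg_add [InnerProductSpace ℝ E] (hw : ‖w‖ ≤ τ * ‖g‖) :
    (1 - τ) * ‖g‖ ^ 2 ≤ -⟪-g + w, g⟫ := by
  rw [inner_add_left, inner_neg_left, real_inner_self_eq_norm_sq]
  nlinarith [real_inner_le_norm w g, norm_nonneg g]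

end Direction

section Bounds

variable {s G D q : ℝ}

theorem pow_four_div_sq_le_of_full_step (hs : 0 < s) (hG : 0 ≤ G) (hD : s * G ≤ D)
    (hq : s * G ^ 2 ≤ q) : G ^ 4 / D ^ 2 ≤ q / s ^ 3 := by
  rcases hG.eq_or_lt with rfl | hG
  · rw [zero_pow four_ne_zero, zero_div]
    exact div_nonneg (by simpa using hq) (by positivity)
  calc G ^ 4 / D ^ 2 ≤ G ^ 4 / (s * G) ^ 2 := by gcongr
    _ = s * G ^ 2 / s ^ 3 := by field_simp
    _ ≤ q / s ^ 3 := by gcongr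

theorem pow_four_div_sq_le_of_backtracked {κ M : ℝ} (hs : 0 < s) (hq : s * G ^ 2 ≤ q)
    (hκ : 0 < κ) (h : κ * q < M * D ^ 2) : G ^ 4 / D ^ 2 ≤ M * q / (κ * s ^ 2) := by
  have hq0 : 0 ≤ q := le_trans (by positivity) hq
  have hD : 0 < D ^ 2 := by
    by_contra! hD
    rw [le_antisymm hD (sq_nonneg D), mul_zero] at h
    nlinarith
  have hG4 : s ^ 2 * G ^ 4 ≤ q ^ 2 :=
    calc s ^ 2 * G ^ 4 = (s * G ^ 2) ^ 2 := by ring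
      _ ≤ q ^ 2 := pow_le_pow_left₀ (by positivity) hq 2
  rw [div_le_div_iff₀ hD (by positivity)]
  nlinarith [mul_le_mul_of_nonneg_left h.le hq0]

end Bounds

theorem summable_of_le_sub_succ {a u : ℕ → ℝ} (ha : ∀ k, 0 ≤ a k)
    (hu : BddBelow (Set.range u)) (h : ∀ k, a k ≤ u k - u (k + 1)) : Summable a := by
  obtain ⟨B, hB⟩ := hu
  refine summable_of_sum_range_le (c := u 0 - B) ha fun m => ?_
  calc ∑ k ∈ Finset.range m, a k ≤ ∑ k ∈ Finset.range m, (u k - u (k + 1)) :=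
        Finset.sum_le_sum fun k _ => h k
    _ = u 0 - u m := Finset.sum_range_sub' u m
    _ ≤ u 0 - B := by linarith [hB (Set.mem_range_self m)]

section Descent

variable {E : Type*} [NormedAddCommGroup E] [InnerProductSpace ℝ E] [CompleteSpace E]
  {f : E → ℝ} {L : ℝ}

theorem hasDerivAt_apply_add_smul (hf : Differentiable ℝ f) (x v : E) (t : ℝ) :
    HasDerivAt (fun s : ℝ => f (x + s • v)) ⟪gradient f (x + t • v), v⟫ t := by
  have hline : HasDerivAt (fun s : ℝ => x + s • v) v t := by
    simpa using ((hasDerivAt_id t).smul_const v).const_add x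
  rw [inner_gradient_left]
  exact (hf _).hasFDerivAt.comp_hasDerivAt t hline

theorem inner_gradient_add_smul_sub_le
    (hlip : ∀ x y : E, ‖gradient f x - gradient f y‖ ≤ L * ‖x - y‖)
    (x v : E) {t : ℝ} (ht : 0 ≤ t) :
    ⟪gradient f (x + t • v) - gradient f x, v⟫ ≤ L * t * ‖v‖ ^ 2 :=
  calc ⟪gradient f (x + t • v) - gradient f x, v⟫
      ≤ ‖gradient f (x + t • v) - gradient f x‖ * ‖v‖ := real_inner_le_norm _ _
    _ ≤ L * ‖(x + t • v) - x‖ * ‖v‖ := by gcongr; exact hlip _ _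
    _ = L * t * ‖v‖ ^ 2 := by
      rw [add_sub_cancel_left, norm_smul, Real.norm_of_nonneg ht]
      ring

theorem image_add_le_of_lipschitz_gradient (hf : Differentiable ℝ f)
    (hlip : ∀ x y : E, ‖gradient f x - gradient f y‖ ≤ L * ‖x - y‖) (x v : E) :
    f (x + v) ≤ f x + ⟪gradient f x, v⟫ + L / 2 * ‖v‖ ^ 2 := by
  set φ : ℝ → ℝ := fun t => f (x + t • v) - t * ⟪gradient f x, v⟫ - L / 2 * t ^ 2 * ‖v‖ ^ 2
  have hφ : ∀ t, HasDerivAt φ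
      (⟪gradient f (x + t • v), v⟫ - ⟪gradient f x, v⟫ - L * t * ‖v‖ ^ 2) t := fun t =>
    (((hasDerivAt_apply_add_smul hf x v t).sub
      ((hasDerivAt_id t).mul_const ⟪gradient f x, v⟫)).sub
      (((hasDerivAt_pow 2 t).const_mul (L / 2)).mul_const (‖v‖ ^ 2))).congr_deriv (by ring)
  have hanti : AntitoneOn φ (Set.Ici 0) := by
    refine antitoneOn_of_deriv_nonpos (convex_Ici 0)
      (fun t _ => (hφ t).continuousAt.continuousWithinAt)
      (fun t _ => (hφ t).differentiableAt.differentiableWithinAt) fun t ht => ?_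
    rw [interior_Ici] at ht
    rw [(hφ t).deriv, ← inner_sub_left]
    linarith [inner_gradient_add_smul_sub_le hlip x v ht.le]
  have h10 : φ 1 ≤ φ 0 := hanti Set.self_mem_Ici (Set.mem_Ici.2 zero_le_one) zero_le_one
  simp only [φ, one_smul, zero_smul, add_zero] at h10
  linarith

theorem neg_inner_gradient_lt_of_not_armijo (hf : Differentiable ℝ f)
    (hlip : ∀ x y : E, ‖gradient f x - gradient f y‖ ≤ L * ‖x - y‖)
    {x d : E} {c₁ t : ℝ} (ht : 0 < t)
    (h : f x + c₁ * t * ⟪d, gradient f x⟫ < f (x + t • d)) :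
    (1 - c₁) * -⟪d, gradient f x⟫ < L / 2 * t * ‖d‖ ^ 2 := by
  have hdesc := image_add_le_of_lipschitz_gradient hf hlip x (t • d)
  rw [real_inner_smul_right, norm_smul, Real.norm_of_nonneg ht.le, real_inner_comm] at hdesc
  refine lt_of_mul_lt_mul_left ?_ ht.le
  linarith

theorem norm_gradient_pow_four_div_le_of_backtracking (hf : Differentiable ℝ f)
    (hlip : ∀ x y : E, ‖gradient f x - gradient f y‖ ≤ L * ‖x - y‖)
    {x d : E} {τ c₁ ρ α ᾱ : ℝ} (hτ : τ < 1) (hc₁ : c₁ < 1) (hρ : 0 < ρ) (hα : 0 < α)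
    (hD : (1 - τ) * ‖gradient f x‖ ≤ ‖d‖)
    (hq : (1 - τ) * ‖gradient f x‖ ^ 2 ≤ -⟪d, gradient f x⟫)
    (hbt : α = ᾱ ∨ f (x + (ρ⁻¹ * α) • d) > f x + c₁ * (ρ⁻¹ * α) * ⟪d, gradient f x⟫) :
    ‖gradient f x‖ ^ 4 / ‖d‖ ^ 2 ≤
      max ((1 - τ) ^ 3 * ᾱ)⁻¹ (L / 2 * ρ⁻¹ / ((1 - c₁) * (1 - τ) ^ 2)) *
        (α * -⟪d, gradient f x⟫) := by
  have hs : 0 < 1 - τ := by linarith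
  have hαq : 0 ≤ α * -⟪d, gradient f x⟫ := mul_nonneg hα.le (le_trans (by positivity) hq)
  rcases hbt with rfl | hviol
  · calc ‖gradient f x‖ ^ 4 / ‖d‖ ^ 2 ≤ -⟪d, gradient f x⟫ / (1 - τ) ^ 3 :=
          pow_four_div_sq_le_of_full_step hs (norm_nonneg _) hD hq
      _ = ((1 - τ) ^ 3 * α)⁻¹ * (α * -⟪d, gradient f x⟫) := by field_simp
      _ ≤ _ := by gcongr; exact le_max_left _ _
  · have hlt := neg_inner_gradient_lt_of_not_armijo hf hlip (mul_pos (inv_pos.2 hρ) hα) hviol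
    calc ‖gradient f x‖ ^ 4 / ‖d‖ ^ 2
        ≤ L / 2 * (ρ⁻¹ * α) * -⟪d, gradient f x⟫ / ((1 - c₁) * (1 - τ) ^ 2) :=
          pow_four_div_sq_le_of_backtracked hs hq (by linarith) hlt
      _ = L / 2 * ρ⁻¹ / ((1 - c₁) * (1 - τ) ^ 2) * (α * -⟪d, gradient f x⟫) := by ring
      _ ≤ _ := by gcongr; exact le_max_right _ _

end Descent

theorem zoutendijk_condition_general
    (n : ℕ) (f : EuclideanSpace ℝ (Fin n) → ℝ)
    (hf : Differentiable ℝ f)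
    (hbdd : BddBelow (Set.range f))
    (L : ℝ)
    (hlip : ∀ x y : EuclideanSpace ℝ (Fin n),
      ‖gradient f x - gradient f y‖ ≤ L * ‖x - y‖)
    (τ c₁ ρ : ℝ)
    (hτ : τ ∈ Set.Ioo (0 : ℝ) 1) (hc₁ : c₁ ∈ Set.Ioo (0 : ℝ) 1)
    (hρ : ρ ∈ Set.Ioo (0 : ℝ) 1)
    (ᾱ : ℝ)
    (x d : ℕ → EuclideanSpace ℝ (Fin n)) (α : ℕ → ℝ)
    (hd0 : d 0 = -gradient f (x 0))
    (hdk : ∀ k, d (k + 1) = -gradient f (x (k + 1)) +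
      (τ * (‖gradient f (x (k + 1))‖ / ‖d k‖)) • d k)
    (hαpos : ∀ k, 0 < α k)
    (harmijo : ∀ k, f (x (k + 1)) ≤
      f (x k) + c₁ * α k * ⟪d k, gradient f (x k)⟫)
    (hbacktrack : ∀ k, α k = ᾱ ∨ (α k ≤ ᾱ ∧
      f (x k + (ρ⁻¹ * α k) • d k) >
        f (x k) + c₁ * (ρ⁻¹ * α k) * ⟪d k, gradient f (x k)⟫)) :
    Summable (fun k => ‖gradient f (x k)‖ ^ 4 / ‖d k‖ ^ 2) := by
  obtain ⟨hτ0, hτ1⟩ := hτ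
  obtain ⟨hc0, hc1⟩ := hc₁
  have hdescent : ∀ k, (1 - τ) * ‖gradient f (x k)‖ ≤ ‖d k‖ ∧
      (1 - τ) * ‖gradient f (x k)‖ ^ 2 ≤ -⟪d k, gradient f (x k)⟫ := by
    intro k
    obtain ⟨w, hdw, hw⟩ : ∃ w, d k = -gradient f (x k) + w ∧ ‖w‖ ≤ τ * ‖gradient f (x k)‖ := by
      cases k with
      | zero => exact ⟨0, by rw [hd0, add_zero], by rw [norm_zero]; positivity⟩
      | succ k => exact ⟨_, hdk k, norm_smul_div_norm_le hτ0.le (norm_nonneg _) _⟩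
    rw [hdw]
    exact ⟨one_sub_mul_norm_le_norm_neg_add hw, one_sub_mul_sq_le_neg_inner_neg_add hw⟩
  have hdecrease : Summable fun k => α k * -⟪d k, gradient f (x k)⟫ := by
    rw [← summable_mul_left_iff hc0.ne']
    refine summable_of_le_sub_succ (u := fun k => f (x k)) (fun k => ?_)
      (hbdd.mono (Set.range_comp_subset_range x f)) fun k => by linarith [harmijo k]
    have hq := le_trans (mul_nonneg (sub_nonneg.2 hτ1.le) (sq_nonneg _)) (hdescent k).2
    exact mul_nonneg hc0.le (mul_nonneg (hαpos k).le hq)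
  exact Summable.of_nonneg_of_le (fun k => by positivity)
    (fun k => norm_gradient_pow_four_div_le_of_backtracking hf hlip hτ1 hc1 hρ.1 (hαpos k)
      (hdescent k).1 (hdescent k).2 ((hbacktrack k).imp_right And.right))
    (hdecrease.mul_left _)

theorem zoutendijk_condition
    (n : ℕ) (f : EuclideanSpace ℝ (Fin n) → ℝ)
    (hf : Differentiable ℝ f)
    (hbdd : BddBelow (Set.range f))
    (L : ℝ) (hL : 0 < L)
    (hlip : ∀ x y : EuclideanSpace ℝ (Fin n),
      ‖gradient f x - gradient f y‖ ≤ L * ‖x - y‖)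
    (τ c₁ ρ : ℝ)
    (hτ : τ ∈ Set.Ioo (0 : ℝ) 1) (hc₁ : c₁ ∈ Set.Ioo (0 : ℝ) 1)
    (hρ : ρ ∈ Set.Ioo (0 : ℝ) 1)
    (ᾱ : ℝ) (hᾱ : 0 < ᾱ)
    (x d : ℕ → EuclideanSpace ℝ (Fin n)) (α : ℕ → ℝ)
    (hg : ∀ k, gradient f (x k) ≠ 0)
    (hd0 : d 0 = -gradient f (x 0))
    (hdk : ∀ k, d (k + 1) = -gradient f (x (k + 1)) +
      (τ * (‖gradient f (x (k + 1))‖ / ‖d k‖)) • d k)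
    (hstep : ∀ k, x (k + 1) = x k + α k • d k)
    (hαpos : ∀ k, 0 < α k)
    (harmijo : ∀ k, f (x (k + 1)) ≤
      f (x k) + c₁ * α k * ⟪d k, gradient f (x k)⟫)
    (hbacktrack : ∀ k, α k = ᾱ ∨ (α k ≤ ᾱ ∧
      f (x k + (ρ⁻¹ * α k) • d k) >
        f (x k) + c₁ * (ρ⁻¹ * α k) * ⟪d k, gradient f (x k)⟫)) :
    Summable (fun k => ‖gradient f (x k)‖ ^ 4 / ‖d k‖ ^ 2) :=
  zoutendijk_condition_general n f hf hbdd L hlip τ c₁ ρ hτ hc₁ hρ ᾱ x d α hd0 hdk hαpos harmijo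
    hbacktrack
end

section
/- Let f : ℝⁿ → ℝ be differentiable, bounded below on ℝⁿ, with gradient ∇f that is L-Lipschitz continuous on ℝⁿ for some L > 0. Fix constants τ, c₁, ρ ∈ (0,1) and ᾱ > 0. Let x_k, d_k, α_k be generated by the new conjugate gradient-like algorithm: g_k = ∇f(x_k) ≠ 0 for all k, d_0 = -g_0, d_k = -g_k + τ·(‖g_k‖/‖d_{k-1}‖)·d_{k-1} for k ≥ 1, x_{k+1} = x_k + α_k d_k, where each α_k > 0 satisfies the Armijo condition f(x_{k+1}) ≤ f(x_k) + c₁ α_k ⟨d_k, g_k⟩ and either α_k = ᾱ or (α_k ≤ ᾱ and f(x_k + ρ⁻¹α_k d_k) > f(x_k) + c₁ρ⁻¹α_k ⟨d_k, g_k⟩). Then the algorithm is globally convergent: lim_{k→∞} ‖∇f(x_k)‖ = 0. -/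
/-!
The direction `d_k = -g_k + q_k` perturbs the steepest-descent direction by a vector with
`‖q_k‖ ≤ τ ‖g_k‖`, so it is a sufficient descent direction: `⟪d_k, g_k⟫ ≤ -(1 - τ) ‖g_k‖²` and
`‖d_k‖ ≤ (1 + τ) ‖g_k‖`. The descent lemma for an `L`-smooth function then bounds every backtracked
step from below by `ρ · 2 (1 - c₁)(1 - τ) / (L (1 + τ)²)`, so each Armijo step decreases `f` by at
least a fixed multiple of `‖g_k‖²`. As `f (x_k)` is decreasing and bounded below, these decreases
tend to zero, hence so does `‖g_k‖`.
-/

open RealInnerProductSpace Set Filter Topology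

section Direction

variable {E : Type*} [NormedAddCommGroup E]

theorem norm_neg_add_le {τ : ℝ} {g q : E} (hq : ‖q‖ ≤ τ * ‖g‖) :
    ‖-g + q‖ ≤ (1 + τ) * ‖g‖ := by
  linarith [norm_add_le (-g) q, norm_neg g]

variable [InnerProductSpace ℝ E]

theorem norm_mul_div_norm_smul_le {τ : ℝ} (hτ : 0 ≤ τ) (g p : E) :
    ‖(τ * (‖g‖ / ‖p‖)) • p‖ ≤ τ * ‖g‖ := by
  rcases eq_or_ne p 0 with rfl | hp
  · simpa using mul_nonneg hτ (norm_nonneg g)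
  · rw [norm_smul, Real.norm_of_nonneg (by positivity), mul_assoc,
      div_mul_cancel₀ _ (norm_ne_zero_iff.mpr hp)]

theorem inner_neg_add_le {τ : ℝ} {g q : E} (hq : ‖q‖ ≤ τ * ‖g‖) :
    ⟪-g + q, g⟫ ≤ -(1 - τ) * ‖g‖ ^ 2 := by
  rw [inner_add_left, inner_neg_left, real_inner_self_eq_norm_sq]
  nlinarith [real_inner_le_norm q g, norm_nonneg g]

end Direction

theorem image_one_le_of_deriv_le {φ φ' : ℝ → ℝ} {K : ℝ} (hφ : ∀ t, HasDerivAt φ (φ' t) t)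
    (hφ' : ∀ t ∈ Ioo (0 : ℝ) 1, φ' t ≤ φ' 0 + K * t) :
    φ 1 ≤ φ 0 + φ' 0 + K / 2 := by
  set ψ : ℝ → ℝ := fun t => φ t - t * φ' 0 - K / 2 * t ^ 2
  have hψ : ∀ t, HasDerivAt ψ (φ' t - φ' 0 - K * t) t := fun t =>
    (((hφ t).sub ((hasDerivAt_id t).mul_const (φ' 0))).sub
      ((hasDerivAt_pow 2 t).const_mul (K / 2))).congr_deriv (by norm_num; ring)
  have hanti : AntitoneOn ψ (Icc 0 1) := by
    refine antitoneOn_of_deriv_nonpos (convex_Icc 0 1)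
      (HasDerivAt.continuousOn fun t _ => hψ t)
      (fun t _ => (hψ t).differentiableAt.differentiableWithinAt) fun t ht => ?_
    rw [interior_Icc] at ht
    rw [(hψ t).deriv]
    linarith [hφ' t ht]
  have h01 := hanti (left_mem_Icc.2 zero_le_one) (right_mem_Icc.2 zero_le_one) zero_le_one
  simp only [ψ] at h01
  linarith

section Smooth

variable {E : Type*} [NormedAddCommGroup E] [InnerProductSpace ℝ E] [CompleteSpace E]
  {f : E → ℝ} {L : ℝ}

theorem image_le_add_inner_gradient_add_sq (hf : Differentiable ℝ f)
    (hlip : ∀ x y, ‖gradient f x - gradient f y‖ ≤ L * ‖x - y‖) (x y : E) :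
    f y ≤ f x + ⟪gradient f x, y - x⟫ + L / 2 * ‖y - x‖ ^ 2 := by
  set v := y - x
  have hφ : ∀ t : ℝ, HasDerivAt (fun t => f (x + t • v)) ⟪gradient f (x + t • v), v⟫ t := by
    intro t
    have hline : HasDerivAt (fun t : ℝ => x + t • v) v t := by
      simpa using ((hasDerivAt_id t).smul_const v).const_add x
    simpa [Function.comp_def] using (hf _).hasGradientAt.hasFDerivAt.comp_hasDerivAt t hline
  have h := image_one_le_of_deriv_le hφ (K := L * ‖v‖ ^ 2) fun t ht => by
    calc ⟪gradient f (x + t • v), v⟫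
        = ⟪gradient f (x + t • v) - gradient f x, v⟫ + ⟪gradient f x, v⟫ := by
          rw [inner_sub_left]; ring
      _ ≤ L * ‖x + t • v - x‖ * ‖v‖ + ⟪gradient f x, v⟫ := by
          gcongr
          exact (real_inner_le_norm _ _).trans (by gcongr; exact hlip _ _)
      _ = ⟪gradient f (x + (0 : ℝ) • v), v⟫ + L * ‖v‖ ^ 2 * t := by
          rw [add_sub_cancel_left, norm_smul, Real.norm_of_nonneg ht.1.le, zero_smul, add_zero]
          ring
  simp only [one_smul, zero_smul, add_zero, v, add_sub_cancel] at h
  linarith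

theorem one_sub_mul_neg_inner_lt_of_armijo_fails (hf : Differentiable ℝ f)
    (hlip : ∀ x y, ‖gradient f x - gradient f y‖ ≤ L * ‖x - y‖) {x d : E} {c₁ t : ℝ}
    (ht : 0 < t) (hfail : f x + c₁ * t * ⟪d, gradient f x⟫ < f (x + t • d)) :
    (1 - c₁) * -⟪d, gradient f x⟫ < L / 2 * t * ‖d‖ ^ 2 := by
  have h := image_le_add_inner_gradient_add_sq hf hlip x (x + t • d)
  rw [add_sub_cancel_left, real_inner_smul_right, real_inner_comm, norm_smul,
    Real.norm_of_nonneg ht.le] at h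
  refine lt_of_mul_lt_mul_left ?_ ht.le
  nlinarith

theorem div_lt_of_armijo_fails (hf : Differentiable ℝ f)
    (hlip : ∀ x y, ‖gradient f x - gradient f y‖ ≤ L * ‖x - y‖) (hL : 0 ≤ L) {x d : E}
    {a b c₁ t : ℝ} (ha : 0 ≤ a) (hc₁ : c₁ ≤ 1)
    (hdg : ⟪d, gradient f x⟫ ≤ -a * ‖gradient f x‖ ^ 2) (hdn : ‖d‖ ≤ b * ‖gradient f x‖)
    (ht : 0 < t) (hfail : f x + c₁ * t * ⟪d, gradient f x⟫ < f (x + t • d)) :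
    2 * (1 - c₁) * a / (L * b ^ 2) < t := by
  have h := one_sub_mul_neg_inner_lt_of_armijo_fails hf hlip ht hfail
  have hd : ‖d‖ ^ 2 ≤ b ^ 2 * ‖gradient f x‖ ^ 2 := by
    rw [← mul_pow]; exact pow_le_pow_left₀ (norm_nonneg d) hdn 2
  have hkey : 0 < (L * b ^ 2 * t - 2 * (1 - c₁) * a) * ‖gradient f x‖ ^ 2 := by
    nlinarith [mul_le_mul_of_nonneg_left hdg (sub_nonneg.2 hc₁),
      mul_le_mul_of_nonneg_left hd (by positivity : 0 ≤ L / 2 * t)]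
  have hlt := sub_pos.1 (pos_of_mul_pos_left hkey (sq_nonneg _))
  have hLb : 0 < L * b ^ 2 :=
    pos_of_mul_pos_left ((by nlinarith : 0 ≤ 2 * (1 - c₁) * a).trans_lt hlt) ht.le
  rw [div_lt_iff₀ hLb]
  linarith

theorem backtracking_sufficient_decrease (hf : Differentiable ℝ f)
    (hlip : ∀ x y, ‖gradient f x - gradient f y‖ ≤ L * ‖x - y‖) (hL : 0 ≤ L) {x d : E}
    {a b c₁ ρ ᾱ α : ℝ} (ha : 0 ≤ a) (hc₁ : c₁ ∈ Icc (0 : ℝ) 1) (hρ : 0 < ρ)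
    (hdg : ⟪d, gradient f x⟫ ≤ -a * ‖gradient f x‖ ^ 2) (hdn : ‖d‖ ≤ b * ‖gradient f x‖)
    (hα : 0 < α) (harmijo : f (x + α • d) ≤ f x + c₁ * α * ⟪d, gradient f x⟫)
    (hback : α = ᾱ ∨ (α ≤ ᾱ ∧ f (x + (ρ⁻¹ * α) • d) >
      f x + c₁ * (ρ⁻¹ * α) * ⟪d, gradient f x⟫)) :
    f (x + α • d) + c₁ * min ᾱ (ρ * (2 * (1 - c₁) * a / (L * b ^ 2))) * a *
      ‖gradient f x‖ ^ 2 ≤ f x := by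
  have hmin : min ᾱ (ρ * (2 * (1 - c₁) * a / (L * b ^ 2))) ≤ α := by
    rcases hback with rfl | ⟨-, hfail⟩
    · exact min_le_left _ _
    · refine (min_le_right _ _).trans ?_
      have ht := div_lt_of_armijo_fails hf hlip hL ha hc₁.2 hdg hdn
        (mul_pos (inv_pos.2 hρ) hα) hfail
      calc ρ * (2 * (1 - c₁) * a / (L * b ^ 2)) ≤ ρ * (ρ⁻¹ * α) := by gcongr
        _ = α := by field_simp
  have hsq : 0 ≤ c₁ * a * ‖gradient f x‖ ^ 2 := by have := hc₁.1; positivity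
  nlinarith [mul_le_mul_of_nonneg_left hdg (mul_nonneg hc₁.1 hα.le),
    mul_le_mul_of_nonneg_left hmin hsq]

end Smooth

theorem tendsto_zero_of_add_mul_sq_le {a u : ℕ → ℝ} {C : ℝ} (hC : 0 < C)
    (ha : BddBelow (range a)) (h : ∀ k, a (k + 1) + C * u k ^ 2 ≤ a k) :
    Tendsto u atTop (𝓝 0) := by
  have hanti : Antitone a := antitone_nat_of_succ_le fun k => by
    nlinarith [h k, mul_nonneg hC.le (sq_nonneg (u k))]
  have hlim := tendsto_atTop_ciInf hanti ha
  have hgap : Tendsto (fun k => (a k - a (k + 1)) / C) atTop (𝓝 0) := by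
    simpa using (hlim.sub ((tendsto_add_atTop_iff_nat 1).2 hlim)).div_const C
  have hsq : Tendsto (fun k => u k ^ 2) atTop (𝓝 0) :=
    squeeze_zero (fun k => sq_nonneg _) (fun k => by rw [le_div_iff₀ hC]; linarith [h k]) hgap
  rw [tendsto_zero_iff_norm_tendsto_zero]
  simpa [Real.sqrt_sq_eq_abs] using hsq.sqrt

theorem global_convergence_general
    (n : ℕ) (f : EuclideanSpace ℝ (Fin n) → ℝ)
    (hf : Differentiable ℝ f)
    (hbdd : BddBelow (Set.range f))
    (L : ℝ) (hL : 0 < L)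
    (hlip : ∀ x y : EuclideanSpace ℝ (Fin n),
      ‖gradient f x - gradient f y‖ ≤ L * ‖x - y‖)
    (τ c₁ ρ : ℝ)
    (hτ : τ ∈ Set.Ioo (0 : ℝ) 1) (hc₁ : c₁ ∈ Set.Ioo (0 : ℝ) 1)
    (hρ : ρ ∈ Set.Ioo (0 : ℝ) 1)
    (ᾱ : ℝ) (hᾱ : 0 < ᾱ)
    (x d : ℕ → EuclideanSpace ℝ (Fin n)) (α : ℕ → ℝ)
    (hd0 : d 0 = -gradient f (x 0))
    (hdk : ∀ k, d (k + 1) = -gradient f (x (k + 1)) +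
      (τ * (‖gradient f (x (k + 1))‖ / ‖d k‖)) • d k)
    (hstep : ∀ k, x (k + 1) = x k + α k • d k)
    (hαpos : ∀ k, 0 < α k)
    (harmijo : ∀ k, f (x (k + 1)) ≤
      f (x k) + c₁ * α k * ⟪d k, gradient f (x k)⟫)
    (hbacktrack : ∀ k, α k = ᾱ ∨ (α k ≤ ᾱ ∧
      f (x k + (ρ⁻¹ * α k) • d k) >
        f (x k) + c₁ * (ρ⁻¹ * α k) * ⟪d k, gradient f (x k)⟫)) :
    Filter.Tendsto (fun k => ‖gradient f (x k)‖) Filter.atTop (nhds 0) := by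
  obtain ⟨hτ0, hτ1⟩ := hτ
  have hdir : ∀ k, ∃ q, d k = -gradient f (x k) + q ∧ ‖q‖ ≤ τ * ‖gradient f (x k)‖ := by
    rintro (_ | k)
    · exact ⟨0, by simp [hd0], by simpa using mul_nonneg hτ0.le (norm_nonneg _)⟩
    · exact ⟨_, hdk k, norm_mul_div_norm_smul_le hτ0.le _ _⟩
  set αmin := min ᾱ (ρ * (2 * (1 - c₁) * (1 - τ) / (L * (1 + τ) ^ 2)))
  have hαmin : 0 < αmin := lt_min hᾱ (mul_pos hρ.1 (div_pos
    (mul_pos (mul_pos two_pos (sub_pos.2 hc₁.2)) (sub_pos.2 hτ1)) (by positivity)))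
  have hdecrease : ∀ k, f (x (k + 1)) + c₁ * αmin * (1 - τ) * ‖gradient f (x k)‖ ^ 2
      ≤ f (x k) := fun k => by
    obtain ⟨q, hq, hqn⟩ := hdir k
    have hk := harmijo k
    rw [hstep k] at hk ⊢
    exact backtracking_sufficient_decrease hf hlip hL.le (sub_nonneg.2 hτ1.le)
      (Ioo_subset_Icc_self hc₁) hρ.1 (hq ▸ inner_neg_add_le hqn) (hq ▸ norm_neg_add_le hqn)
      (hαpos k) hk (hbacktrack k)
  exact tendsto_zero_of_add_mul_sq_le (mul_pos (mul_pos hc₁.1 hαmin) (sub_pos.2 hτ1))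
    (hbdd.mono (range_comp_subset_range x f)) hdecrease

theorem global_convergence
    (n : ℕ) (f : EuclideanSpace ℝ (Fin n) → ℝ)
    (hf : Differentiable ℝ f)
    (hbdd : BddBelow (Set.range f))
    (L : ℝ) (hL : 0 < L)
    (hlip : ∀ x y : EuclideanSpace ℝ (Fin n),
      ‖gradient f x - gradient f y‖ ≤ L * ‖x - y‖)
    (τ c₁ ρ : ℝ)
    (hτ : τ ∈ Set.Ioo (0 : ℝ) 1) (hc₁ : c₁ ∈ Set.Ioo (0 : ℝ) 1)
    (hρ : ρ ∈ Set.Ioo (0 : ℝ) 1)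
    (ᾱ : ℝ) (hᾱ : 0 < ᾱ)
    (x d : ℕ → EuclideanSpace ℝ (Fin n)) (α : ℕ → ℝ)
    (hg : ∀ k, gradient f (x k) ≠ 0)
    (hd0 : d 0 = -gradient f (x 0))
    (hdk : ∀ k, d (k + 1) = -gradient f (x (k + 1)) +
      (τ * (‖gradient f (x (k + 1))‖ / ‖d k‖)) • d k)
    (hstep : ∀ k, x (k + 1) = x k + α k • d k)
    (hαpos : ∀ k, 0 < α k)
    (harmijo : ∀ k, f (x (k + 1)) ≤
      f (x k) + c₁ * α k * ⟪d k, gradient f (x k)⟫)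
    (hbacktrack : ∀ k, α k = ᾱ ∨ (α k ≤ ᾱ ∧
      f (x k + (ρ⁻¹ * α k) • d k) >
        f (x k) + c₁ * (ρ⁻¹ * α k) * ⟪d k, gradient f (x k)⟫)) :
    Filter.Tendsto (fun k => ‖gradient f (x k)‖) Filter.atTop (nhds 0) :=
  global_convergence_general n f hf hbdd L hL hlip τ c₁ ρ hτ hc₁ hρ ᾱ hᾱ x d α hd0 hdk hstep hαpos
    harmijo hbacktrack
end
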